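/- arXiv:2602.05203 — 3 statements merged into one kernel-verified Lean document; each statement's English description precedes it below -/
import Mathlib

section
/- Let k ≥ 1 and let λ ∈ ℂ satisfy ∏_{j=1}^{k}(λ + j(j−1)) = ∏_{i=1}^{k}(2i−1)²/4. Then Re λ ≤ 1/4. -/
open Finset

theorem prod_lt_norm_prod_of_lt_re {ι : Type*} {s : Finset ι} (hs : s.Nonempty) {f : ι → ℂ}
    {c : ι → ℝ} (hc₀ : ∀ i ∈ s, 0 < c i) (hc : ∀ i ∈ s, c i < (f i).re) :
    ∏ i ∈ s, c i < ‖∏ i ∈ s, f i‖ := by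
  rw [norm_prod]
  exact prod_lt_prod_of_nonempty hc₀ (fun i hi ↦ (hc i hi).trans_le (Complex.re_le_norm _)) hs

theorem stmt_2 (k : ℕ) (hk : 1 ≤ k) (lam : ℂ)
    (h : ∏ j ∈ Finset.Icc 1 k, (lam + (j : ℂ) * ((j : ℂ) - 1)) =
      ∏ i ∈ Finset.Icc 1 k, ((2 * (i : ℂ) - 1) ^ 2 / 4)) :
    lam.re ≤ 1 / 4 := by
  by_contra! hlt
  -- `(2j - 1)² / 4 = 1/4 + j(j - 1)`, so each left factor has the larger real part.
  have hlt_re : ∀ j ∈ Icc 1 k,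
      (2 * (j : ℝ) - 1) ^ 2 / 4 < (lam + (j : ℂ) * ((j : ℂ) - 1)).re := by
    intro j _
    simp only [Complex.add_re, Complex.mul_re, Complex.natCast_re, Complex.natCast_im,
      Complex.sub_re, Complex.sub_im, Complex.one_re, Complex.one_im]
    linarith
  have hpos : ∀ j ∈ Icc 1 k, 0 < (2 * (j : ℝ) - 1) ^ 2 / 4 := fun j hj ↦ by
    have : (1 : ℝ) ≤ j := by exact_mod_cast (mem_Icc.1 hj).1
    nlinarith
  have key := prod_lt_norm_prod_of_lt_re (nonempty_Icc.2 hk) hpos hlt_re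
  have hrhs : ∏ i ∈ Icc 1 k, ((2 * (i : ℂ) - 1) ^ 2 / 4)
      = ((∏ i ∈ Icc 1 k, (2 * (i : ℝ) - 1) ^ 2 / 4 : ℝ) : ℂ) := by
    push_cast; rfl
  rw [h, hrhs, Complex.norm_real, Real.norm_of_nonneg (prod_pos hpos).le] at key
  exact key.false
end

section
/- For all ρ > 0, n ≥ 3, and t ∈ [0,π], the quantity f(ρ) = (2−n)·cosh(ρ)/sinh(ρ) + ((n−3)/2)·sinh(ρ)/(cosh(ρ) − 1) is strictly negative. Consequently (2−n)·cosh(ρ)/sinh(ρ) + ((n−4)/2 − θ)·sinh(ρ)/(cosh(ρ) + cos t) < 0 whenever θ ≥ −1/2. -/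
/-! Since `sinh² ρ = (cosh ρ - 1)(cosh ρ + 1)`, the first expression equals
`((1 - n) cosh ρ + n - 3) / (2 sinh ρ)`, which is negative because `cosh ρ > 1`.
In the second expression the coefficient `(n - 4)/2 - θ` is at most `(n - 3)/2` and the denominator
`cosh ρ + cos t` is at least `cosh ρ - 1 > 0`, so it is bounded by the first one. -/

open Real

lemma sinh_div_cosh_sub_one {x : ℝ} (hx : x ≠ 0) :
    sinh x / (cosh x - 1) = (cosh x + 1) / sinh x := by
  have hs : sinh x ≠ 0 := sinh_ne_zero.mpr hx
  have hc : cosh x - 1 ≠ 0 := sub_ne_zero.mpr (one_lt_cosh.mpr hx).ne'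
  rw [div_eq_div_iff hc hs]
  linear_combination -cosh_sq x

lemma mul_coth_add_mul_sinh_div_cosh_sub_one_eq {x : ℝ} (hx : x ≠ 0) (a : ℝ) :
    (2 - a) * cosh x / sinh x + (a - 3) / 2 * sinh x / (cosh x - 1)
      = ((1 - a) * cosh x + (a - 3)) / (2 * sinh x) := by
  rw [mul_div_assoc _ (sinh x), sinh_div_cosh_sub_one hx]
  field_simp
  ring

lemma mul_coth_add_mul_sinh_div_cosh_sub_one_neg {x a : ℝ} (hx : 0 < x) (ha : 1 ≤ a) :
    (2 - a) * cosh x / sinh x + (a - 3) / 2 * sinh x / (cosh x - 1) < 0 := by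
  rw [mul_coth_add_mul_sinh_div_cosh_sub_one_eq hx.ne']
  have hc : 1 < cosh x := one_lt_cosh.mpr hx.ne'
  have hs : 0 < sinh x := sinh_pos_iff.mpr hx
  apply div_neg_of_neg_of_pos _ (by positivity)
  nlinarith

theorem stmt_3_general (n : ℕ) (hn : 3 ≤ n) (ρ t θ : ℝ) (hρ : 0 < ρ)
    (hθ : -(1 / 2) ≤ θ) :
    ((2 - (n : ℝ)) * Real.cosh ρ / Real.sinh ρ
        + (((n : ℝ) - 3) / 2) * Real.sinh ρ / (Real.cosh ρ - 1) < 0) ∧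
    ((2 - (n : ℝ)) * Real.cosh ρ / Real.sinh ρ
        + (((n : ℝ) - 4) / 2 - θ) * Real.sinh ρ / (Real.cosh ρ + Real.cos t) < 0) := by
  have hn3 : (3 : ℝ) ≤ n := by exact_mod_cast hn
  have hs : 0 ≤ sinh ρ := (sinh_pos_iff.mpr hρ).le
  have hfirst := mul_coth_add_mul_sinh_div_cosh_sub_one_neg hρ (a := n) (by linarith)
  have hsecond : (((n : ℝ) - 4) / 2 - θ) * sinh ρ / (cosh ρ + cos t)
      ≤ ((n : ℝ) - 3) / 2 * sinh ρ / (cosh ρ - 1) :=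
    div_le_div₀ (mul_nonneg (by linarith) hs) (mul_le_mul_of_nonneg_right (by linarith) hs)
      (sub_pos.mpr (one_lt_cosh.mpr hρ.ne')) (by linarith [neg_one_le_cos t])
  exact ⟨hfirst, by linarith⟩

theorem stmt_3 (n : ℕ) (hn : 3 ≤ n) (ρ t θ : ℝ) (hρ : 0 < ρ)
    (ht : t ∈ Set.Icc 0 Real.pi) (hθ : -(1 / 2) ≤ θ) :
    ((2 - (n : ℝ)) * Real.cosh ρ / Real.sinh ρ
        + (((n : ℝ) - 3) / 2) * Real.sinh ρ / (Real.cosh ρ - 1) < 0) ∧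
    ((2 - (n : ℝ)) * Real.cosh ρ / Real.sinh ρ
        + (((n : ℝ) - 4) / 2 - θ) * Real.sinh ρ / (Real.cosh ρ + Real.cos t) < 0) :=
  stmt_3_general n hn ρ t θ hρ hθ
end

section
/- Let μ be a finite positive Borel measure on a metric space X with μ(X) = 1, and ν a finite positive Borel measure on X, and suppose there is a constant C₀ > 0 such that for all bounded continuous φ ≥ 0: (∫ φ^q dμ)^{1/q} ≤ C₀ (∫ φ^p dν)^{1/p} with 1 ≤ p < q < ∞. Then the set A = {x : μ({x}) > 0} of atoms of μ satisfies: for every atom x with μ({x}) = u > 0, one has ν({x}) ≥ C₀^{−p}·u^{p/q}. -/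
/-!
Test the inequality with an Urysohn function `φ` that equals `1` at the atom `x`, takes values in
`[0, 1]`, and vanishes off the ball `B(x, r)`. Then `∫ φ^q dμ ≥ μ {x}` and `∫ φ^p dν ≤ ν (B(x, r))`,
so `C₀^{-p} μ({x})^{p/q} ≤ ν (B(x, r))` for every `r > 0`, and the balls shrink to `{x}`.
-/

open MeasureTheory Filter Topology Set Metric

section

variable {X : Type*} [MeasurableSpace X]

lemma measureReal_singleton_le_integral (μ : Measure X) [IsFiniteMeasure μ] {f : X → ℝ}
    (hf_nonneg : 0 ≤ f) (hf_int : Integrable f μ) {x : X} (hfx : 1 ≤ f x) :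
    μ.real {x} ≤ ∫ y, f y ∂μ :=
  calc μ.real {x} ≤ μ.real {y | 1 ≤ f y} := measureReal_mono (by simpa using hfx)
    _ = 1 * μ.real {y | 1 ≤ f y} := (one_mul _).symm
    _ ≤ ∫ y, f y ∂μ := mul_meas_ge_le_integral_of_nonneg (ae_of_all _ hf_nonneg) hf_int 1

lemma integral_le_measureReal (ν : Measure X) [IsFiniteMeasure ν] {f : X → ℝ} {s : Set X}
    (hs : ∀ x ∈ s, f x ≤ 1) (h's : ∀ x ∈ sᶜ, f x ≤ 0) :
    ∫ x, f x ∂ν ≤ ν.real s :=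
  (ENNReal.ofReal_le_iff_le_toReal (measure_ne_top ν s)).mp (integral_le_measure hs h's)

end

lemma rpow_neg_mul_rpow_div_le {C u v p q : ℝ} (hC : 0 < C) (hp : 0 < p) (hu : 0 ≤ u)
    (hv : 0 ≤ v) (h : u ^ (1 / q) ≤ C * v ^ (1 / p)) : C ^ (-p) * u ^ (p / q) ≤ v := by
  have h' := Real.rpow_le_rpow (Real.rpow_nonneg hu _) h hp.le
  rw [← Real.rpow_mul hu, one_div_mul_eq_div, Real.mul_rpow hC.le (Real.rpow_nonneg hv _),
    ← Real.rpow_mul hv, one_div_mul_cancel hp.ne', Real.rpow_one] at h'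
  rwa [Real.rpow_neg hC.le, inv_mul_le_iff₀ (Real.rpow_pos_of_pos hC p)]

lemma rpow_neg_mul_measureReal_singleton_le_of_isOpen {X : Type*} [TopologicalSpace X]
    [NormalSpace X] [T1Space X] [MeasurableSpace X] [OpensMeasurableSpace X]
    (μ ν : Measure X) [IsFiniteMeasure μ] [IsFiniteMeasure ν] {C₀ p q : ℝ} (hC₀ : 0 < C₀)
    (hp : 0 < p) (hq : 0 < q)
    (hineq : ∀ φ : X → ℝ, Continuous φ → (∃ M, ∀ x, |φ x| ≤ M) → (∀ x, 0 ≤ φ x) →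
      (∫ x, φ x ^ q ∂μ) ^ (1 / q) ≤ C₀ * (∫ x, φ x ^ p ∂ν) ^ (1 / p))
    {U : Set X} (hU : IsOpen U) {x : X} (hx : x ∈ U) :
    C₀ ^ (-p) * μ.real {x} ^ (p / q) ≤ ν.real U := by
  obtain ⟨φ, hφU, hφx, hφ01⟩ := exists_continuous_zero_one_of_isClosed hU.isClosed_compl
    isClosed_singleton (disjoint_singleton_right.mpr (not_not_intro hx))
  have hφ0 (y : X) : 0 ≤ φ y := (hφ01 y).1
  have hφ1 (y : X) : φ y ≤ 1 := (hφ01 y).2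
  have hφq_int : Integrable (fun y ↦ φ y ^ q) μ := by
    refine .of_bound (φ.continuous.rpow_const fun _ ↦ Or.inr hq.le).aestronglyMeasurable 1
      (ae_of_all _ fun y ↦ ?_)
    rw [Real.norm_of_nonneg (Real.rpow_nonneg (hφ0 y) q)]
    exact Real.rpow_le_one (hφ0 y) (hφ1 y) hq.le
  have h_atom : μ.real {x} ≤ ∫ y, φ y ^ q ∂μ :=
    measureReal_singleton_le_integral μ (fun y ↦ Real.rpow_nonneg (hφ0 y) q) hφq_int
      (by simp [hφx (mem_singleton x)])
  have h_open : ∫ y, φ y ^ p ∂ν ≤ ν.real U :=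
    integral_le_measureReal ν (fun y _ ↦ Real.rpow_le_one (hφ0 y) (hφ1 y) hp.le)
      (fun y hy ↦ by simp [hφU hy, Real.zero_rpow hp.ne'])
  have h_test := hineq φ φ.continuous ⟨1, fun y ↦ abs_le.mpr ⟨by linarith [hφ0 y], hφ1 y⟩⟩ hφ0
  refine rpow_neg_mul_rpow_div_le hC₀ hp measureReal_nonneg measureReal_nonneg ?_
  calc μ.real {x} ^ (1 / q) ≤ (∫ y, φ y ^ q ∂μ) ^ (1 / q) := by gcongr
    _ ≤ C₀ * (∫ y, φ y ^ p ∂ν) ^ (1 / p) := h_test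
    _ ≤ C₀ * ν.real U ^ (1 / p) := by
      gcongr
      exact integral_nonneg fun y ↦ Real.rpow_nonneg (hφ0 y) p

lemma tendsto_measureReal_ball_singleton {X : Type*} [MetricSpace X] [MeasurableSpace X]
    [OpensMeasurableSpace X] (ν : Measure X) [IsFiniteMeasure ν] (x : X) :
    Tendsto (fun r ↦ ν.real (ball x r)) (𝓝[>] 0) (𝓝 (ν.real {x})) := by
  have h := tendsto_measure_thickening_of_isClosed (μ := ν) ⟨1, one_pos, measure_ne_top ν _⟩
    (isClosed_singleton (x := x))
  simp only [thickening_singleton] at h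
  exact (ENNReal.tendsto_toReal (measure_ne_top ν _)).comp h

theorem stmt_14_general {X : Type*} [MetricSpace X] [MeasurableSpace X] [BorelSpace X]
    (μ ν : Measure X) [IsFiniteMeasure μ] [IsFiniteMeasure ν]
    (C₀ p q : ℝ) (hC₀ : 0 < C₀) (hp : 1 ≤ p) (hpq : p < q)
    (hineq : ∀ φ : X → ℝ, Continuous φ → (∃ M, ∀ x, |φ x| ≤ M) → (∀ x, 0 ≤ φ x) →
      (∫ x, φ x ^ q ∂μ) ^ (1 / q) ≤ C₀ * (∫ x, φ x ^ p ∂ν) ^ (1 / p)) :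
    ∀ x : X, 0 < μ {x} →
      C₀ ^ (-p) * ((μ {x}).toReal) ^ (p / q) ≤ (ν {x}).toReal := by
  intro x _
  have hp₀ : 0 < p := zero_lt_one.trans_le hp
  have h_ball : ∀ r > 0, C₀ ^ (-p) * μ.real {x} ^ (p / q) ≤ ν.real (ball x r) := fun r hr ↦
    rpow_neg_mul_measureReal_singleton_le_of_isOpen μ ν hC₀ hp₀ (hp₀.trans hpq) hineq
      isOpen_ball (mem_ball_self hr)
  exact ge_of_tendsto (tendsto_measureReal_ball_singleton ν x)
    (eventually_nhdsWithin_of_forall h_ball)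

theorem stmt_14 {X : Type*} [MetricSpace X] [MeasurableSpace X] [BorelSpace X]
    (μ ν : Measure X) [IsFiniteMeasure μ] [IsFiniteMeasure ν]
    (hμ : μ Set.univ = 1) (C₀ p q : ℝ) (hC₀ : 0 < C₀) (hp : 1 ≤ p) (hpq : p < q)
    (hineq : ∀ φ : X → ℝ, Continuous φ → (∃ M, ∀ x, |φ x| ≤ M) → (∀ x, 0 ≤ φ x) →
      (∫ x, φ x ^ q ∂μ) ^ (1 / q) ≤ C₀ * (∫ x, φ x ^ p ∂ν) ^ (1 / p)) :
    ∀ x : X, 0 < μ {x} →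
      C₀ ^ (-p) * ((μ {x}).toReal) ^ (p / q) ≤ (ν {x}).toReal :=
  stmt_14_general μ ν C₀ p q hC₀ hp hpq hineq
end
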